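/- For a square matrix A expressible as A = Σ_i s_i Z_i where the s_i are independent real random variables and each Z_i is a fixed rank-one square matrix, the expectation of the adjugate equals the adjugate of the expectation: E[adj(A)] = adj(E[A]). -/

import Mathlib

/-!
A rank-one perturbation changes the adjugate affinely: `adj (B + x • u vᵀ) = adj B + x • D`
for a matrix `D` independent of `x`.
Hence `t ↦ adj (∑ i, t i • Z i)` is affine in each coordinate separately, i.e. a linear
combination of the monomials `∏ i ∈ S, t i`. By independence the expectation of
`∏ i ∈ S, s i` is `∏ i ∈ S, 𝔼 s i`, so taking expectations commutes with this polynomial.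
-/

open MeasureTheory Matrix Function ProbabilityTheory

open scoped Matrix.Norms.L2Operator

namespace AlternatingMap

variable {R M N ι : Type*} [CommRing R] [AddCommGroup M] [Module R M] [AddCommGroup N]
  [Module R N] [Fintype ι] [DecidableEq ι] (f : M [⋀^ι]→ₗ[R] N)

omit [Fintype ι] in
lemma map_piecewise_const_eq_zero {s : Finset ι} (hs : 1 < s.card) (v : M) (m : ι → M) :
    f (s.piecewise (fun _ => v) m) = 0 := by
  obtain ⟨a, ha, b, hb, hab⟩ := Finset.one_lt_card.mp hs
  exact f.map_eq_zero_of_eq _ (by simp [ha, hb]) hab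

lemma map_add_smul_const (m : ι → M) (c : ι → R) (v : M) :
    f (m + fun k => c k • v) = f m + ∑ k, c k • f (update m k v) := by
  have hterm (s : Finset ι) : f (s.piecewise (fun k => c k • v) m)
      = (∏ k ∈ s, c k) • f (s.piecewise (fun _ => v) m) := by
    rw [← f.coe_multilinearMap, ← MultilinearMap.map_piecewise_smul]
    congr 1
    ext k
    by_cases hk : k ∈ s <;> simp [hk]
  have hsupport : ∑ s : Finset ι, f (s.piecewise (fun k => c k • v) m)
      = ∑ s ∈ insert ∅ (Finset.univ.map ⟨singleton, Finset.singleton_injective⟩),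
          f (s.piecewise (fun k => c k • v) m) := by
    refine (Finset.sum_subset (Finset.subset_univ _) fun s _ hs => ?_).symm
    have hcard : 1 < s.card := by
      by_contra! h
      obtain h0 | h1 : s.card = 0 ∨ s.card = 1 := by omega
      · exact hs (by simp [Finset.card_eq_zero.mp h0])
      · obtain ⟨a, rfl⟩ := Finset.card_eq_one.mp h1
        exact hs (by simp)
    rw [hterm, f.map_piecewise_const_eq_zero hcard, smul_zero]
  rw [add_comm, f.map_add_univ, hsupport, Finset.sum_insert (by simp), Finset.sum_map]
  simp [Finset.piecewise_singleton]

end AlternatingMap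

namespace Matrix

theorem exists_eq_vecMulVec_of_rank_le_one {m n K : Type*} [Fintype m] [Fintype n] [Field K]
    (A : Matrix m n K) (h : A.rank ≤ 1) : ∃ u v, A = vecMulVec u v := by
  rw [A.rank_eq_finrank_span_row] at h
  obtain ⟨v, hv⟩ := ((Submodule.finrank_le_one_iff_isPrincipal _).mp h).principal
  have hrow (k : m) : ∃ c : K, c • v = A k := by
    rw [← Submodule.mem_span_singleton, ← hv]
    exact Submodule.subset_span (Set.mem_range_self k)
  choose u hu using hrow
  exact ⟨u, v, by ext k j; simp [← hu, vecMulVec_apply]⟩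

variable {n R : Type*} [Fintype n] [DecidableEq n] [CommRing R]

theorem det_add_vecMulVec (A : Matrix n n R) (u v : n → R) :
    (A + vecMulVec u v).det = A.det + ∑ k, u k * (A.updateRow k v).det :=
  detRowAlternating.map_add_smul_const A u v

theorem exists_adjugate_add_smul_vecMulVec (B : Matrix n n R) (u v : n → R) :
    ∃ D : Matrix n n R, ∀ x : R, (B + x • vecMulVec u v).adjugate = B.adjugate + x • D := by
  have hrow (x : R) (p q : n) : (B + x • vecMulVec u v).updateRow q (Pi.single p 1)
      = B.updateRow q (Pi.single p 1) + vecMulVec (x • update u q 0) v := by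
    ext k j
    by_cases hk : k = q
    · subst hk; simp [vecMulVec_apply]
    · simp [hk, vecMulVec_apply]
  refine ⟨of fun p q => ∑ k, update u q 0 k * ((B.updateRow q (Pi.single p 1)).updateRow k v).det,
    fun x => ?_⟩
  ext p q
  simp only [adjugate_apply, hrow, det_add_vecMulVec, add_apply, smul_apply, of_apply,
    Pi.smul_apply, smul_eq_mul, Finset.mul_sum, mul_assoc]

end Matrix

section Multiaffine

variable {ι R M : Type*} [DecidableEq ι] [CommRing R] [AddCommGroup M] [Module R M]

def IsMultiaffine (g : (ι → R) → M) : Prop :=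
  ∀ t i, ∃ a b : M, ∀ x : R, g (update t i x) = a + x • b

namespace IsMultiaffine

variable {g : (ι → R) → M}

lemma update_eq (hg : IsMultiaffine g) (t : ι → R) (i : ι) (x : R) :
    g (update t i x) = g (update t i 0) + x • (g (update t i 1) - g (update t i 0)) := by
  obtain ⟨a, b, hab⟩ := hg t i
  simp [hab]

lemma comp_update (hg : IsMultiaffine g) (j : ι) (y : R) :
    IsMultiaffine fun t => g (update t j y) := by
  intro t i
  by_cases hij : i = j
  · subst hij
    exact ⟨g (update t i y), 0, fun x => by simp⟩
  · obtain ⟨a, b, hab⟩ := hg (update t j y) i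
    exact ⟨a, b, fun x => by simp only [update_comm hij, hab]⟩

lemma exists_eq_sum_powerset (hg : IsMultiaffine g) {F : Finset ι} (hF : DependsOn g F) :
    ∃ c : Finset ι → M, ∀ t, g t = ∑ S ∈ F.powerset, (∏ i ∈ S, t i) • c S := by
  induction F using Finset.induction_on generalizing g with
  | empty =>
    rw [Finset.coe_empty] at hF
    exact ⟨fun _ => g 0, fun t => by simpa using hF.empty t 0⟩
  | insert a F ha ih =>
    have hF' (y : R) : DependsOn (fun t => g (update t a y)) F := by
      simpa [Finset.erase_insert ha] using hF.update a y
    obtain ⟨c₀, hc₀⟩ := ih (hg.comp_update a 0) (hF' 0)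
    obtain ⟨c₁, hc₁⟩ := ih (hg.comp_update a 1) (hF' 1)
    refine ⟨fun S => if a ∈ S then c₁ (S.erase a) - c₀ (S.erase a) else c₀ S, fun t => ?_⟩
    have hmem {S} (hS : S ∈ F.powerset) : a ∉ S := fun h => ha (Finset.mem_powerset.mp hS h)
    have hsplit : g t = g (update t a 0) + t a • (g (update t a 1) - g (update t a 0)) := by
      rw [← hg.update_eq, update_eq_self]
    rw [hsplit, hc₀, hc₁, Finset.sum_powerset_insert ha, ← Finset.sum_sub_distrib,
      Finset.smul_sum]
    congr 1
    · exact Finset.sum_congr rfl fun S hS => by simp only [if_neg (hmem hS)]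
    · refine Finset.sum_congr rfl fun S hS => ?_
      simp only [if_pos (Finset.mem_insert_self a S), Finset.erase_insert (hmem hS),
        Finset.prod_insert (hmem hS), ← smul_sub, mul_smul]

lemma exists_eq_sum_prod_smul [Fintype ι] (hg : IsMultiaffine g) :
    ∃ c : Finset ι → M, ∀ t, g t = ∑ S, (∏ i ∈ S, t i) • c S := by
  simpa using hg.exists_eq_sum_powerset (F := Finset.univ) (by simpa using dependsOn_univ g)

end IsMultiaffine

end Multiaffine

theorem Matrix.isMultiaffine_adjugate_sum_smul {ι n K : Type*} [Fintype ι] [DecidableEq ι]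
    [Fintype n] [DecidableEq n] [Field K] {Z : ι → Matrix n n K} (hZ : ∀ i, (Z i).rank ≤ 1) :
    IsMultiaffine fun t : ι → K => (∑ i, t i • Z i).adjugate := by
  intro t i
  have hsum (x : K) : ∑ j, update t i x j • Z j = ∑ j, update t i 0 j • Z j + x • Z i := by
    simp only [apply_update (fun j c => c • Z j), Finset.sum_update_of_mem (Finset.mem_univ i),
      zero_smul, zero_add, add_comm]
  obtain ⟨u, v, huv⟩ := (Z i).exists_eq_vecMulVec_of_rank_le_one (hZ i)
  obtain ⟨D, hD⟩ := exists_adjugate_add_smul_vecMulVec (∑ j, update t i 0 j • Z j) u v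
  exact ⟨_, D, fun x => by beta_reduce; rw [hsum, huv, hD]⟩

lemma ProbabilityTheory.iIndepFun.integral_finset_prod {Ω ι : Type*} [MeasurableSpace Ω]
    {μ : Measure Ω} {s : ι → Ω → ℝ} (hindep : iIndepFun s μ)
    (hs : ∀ i, AEStronglyMeasurable (s i) μ) (S : Finset ι) :
    ∫ ω, ∏ i ∈ S, s i ω ∂μ = ∏ i ∈ S, ∫ ω, s i ω ∂μ := by
  simp_rw [← Finset.prod_coe_sort S]
  exact (hindep.precomp Subtype.val_injective).integral_fun_prod_eq_prod_integral fun i => hs i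

lemma IsMultiaffine.integral_comp_eq_comp_integral {Ω ι E : Type*} [MeasurableSpace Ω]
    {μ : Measure Ω} [Fintype ι] [DecidableEq ι] [NormedAddCommGroup E] [NormedSpace ℝ E]
    [CompleteSpace E] {g : (ι → ℝ) → E} (hg : IsMultiaffine g) {s : ι → Ω → ℝ}
    (hindep : iIndepFun s μ) (hint : ∀ S : Finset ι, Integrable (fun ω => ∏ i ∈ S, s i ω) μ) :
    ∫ ω, g (fun i => s i ω) ∂μ = g (fun i => ∫ ω, s i ω ∂μ) := by
  obtain ⟨c, hc⟩ := hg.exists_eq_sum_prod_smul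
  have hs (i : ι) : AEStronglyMeasurable (s i) μ := by
    simpa using (hint {i}).aestronglyMeasurable
  simp only [hc]
  rw [integral_finsetSum _ fun S _ => (hint S).smul_const (c S)]
  simp only [integral_smul_const, hindep.integral_finset_prod hs]

theorem adjugate_expectation_eq_general {Ω : Type*} [MeasurableSpace Ω] (μ : Measure Ω) {n d : ℕ}
    (Z : Fin n → Matrix (Fin d) (Fin d) ℝ) (hZ : ∀ i, (Z i).rank ≤ 1)
    (s : Fin n → Ω → ℝ)
    (hindep : ProbabilityTheory.iIndepFun s μ)
    (hint : ∀ S : Finset (Fin n), Integrable (fun ω => ∏ i ∈ S, s i ω) μ) :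
    ∫ ω, (∑ i, s i ω • Z i).adjugate ∂μ = (∑ i, (∫ ω, s i ω ∂μ) • Z i).adjugate :=
  (isMultiaffine_adjugate_sum_smul hZ).integral_comp_eq_comp_integral hindep hint

/-- Expectation of the adjugate of a sum of independently scaled rank-one matrices
equals the adjugate of the expectation. -/
theorem adjugate_expectation_eq {Ω : Type*} [MeasurableSpace Ω] (μ : Measure Ω)
    [IsProbabilityMeasure μ] {n d : ℕ}
    (Z : Fin n → Matrix (Fin d) (Fin d) ℝ) (hZ : ∀ i, (Z i).rank ≤ 1)
    (s : Fin n → Ω → ℝ) (hmeas : ∀ i, Measurable (s i))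
    (hindep : ProbabilityTheory.iIndepFun s μ)
    (hint : ∀ S : Finset (Fin n), Integrable (fun ω => ∏ i ∈ S, s i ω) μ) :
    ∫ ω, (∑ i, s i ω • Z i).adjugate ∂μ = (∑ i, (∫ ω, s i ω ∂μ) • Z i).adjugate :=
  adjugate_expectation_eq_general μ Z hZ s hindep hint
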